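/- arXiv:2512.24587 — 2 statements merged into one kernel-verified Lean document; each statement's English description precedes it below -/
import Mathlib

section
/- (Empirical process bound for the bumped empirical risk.) Under the stated conditions (i.i.d. datapoints and bounded costs), for each j ∈ {1,…,m}, each n ≥ 2, and every fixed λ_{1:(j−1)} ∈ ℝ^{j−1}, with probability at least 1 − 2/√n one has sup over λ_j ∈ ℝ of |g_j^+(λ_j; λ_{1:(j−1)}) − g_j^*(λ_j; λ_{1:(j−1)})| ≤ (16√2 + 2)·Vmax_j·√(log n / n). -/
open MeasureTheory Set

attribute [local instance] Classical.propDecidable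

noncomputable section

/-- The loss `L_j^{(i)}(λ_{1:j}) = V_j^{(i)} · 1{S_1^{(i)} ≤ λ_1, …, S_{j−1}^{(i)} ≤ λ_{j−1},
S_j^{(i)} > λ_j}`.  Only the coordinates `ℓ ≤ j` of the vector `lam` are read. -/
def lossFn {Ω : Type*} {m n : ℕ} (S V : Fin (n + 1) → Fin m → Ω → ℝ)
    (j : Fin m) (i : Fin (n + 1)) (lam : Fin m → ℝ) (ω : Ω) : ℝ :=
  V i j ω * (if (∀ l, l < j → S i l ω ≤ lam l) ∧ lam j < S i j ω then 1 else 0)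

/-- The population risk `g_j^*(λ_j; λ_{1:(j−1)}) = E[L_j^{(n+1)}(λ_{1:j})]`, the expectation being
taken at the test datapoint `i = n+1`. -/
def gStar {Ω : Type*} [MeasurableSpace Ω] {m n : ℕ} (μ : Measure Ω)
    (S V : Fin (n + 1) → Fin m → Ω → ℝ) (j : Fin m) (lam : Fin m → ℝ) : ℝ :=
  ∫ ω, lossFn S V j (Fin.last n) lam ω ∂μ

/-- `U_j^*(λ_{1:(j−1)}; b) = sup{x ∈ Λ_j : g_j^*(x; λ_{1:(j−1)}) > b}`, the supremum of the empty
set being `λ_j^min` (implemented by inserting `λ_j^min` into the set, which does not change the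
supremum of a nonempty subset of `Λ_j`). -/
def UStar {Ω : Type*} [MeasurableSpace Ω] {m n : ℕ} (μ : Measure Ω)
    (S V : Fin (n + 1) → Fin m → Ω → ℝ) (lamMin lamMax : Fin m → ℝ)
    (j : Fin m) (lam : Fin m → ℝ) (b : ℝ) : ℝ :=
  sSup (insert (lamMin j)
    {x | x ∈ Icc (lamMin j) (lamMax j) ∧ b < gStar μ S V j (Function.update lam j x)})

/-- The bumped empirical risk `g_j^+(λ_j; λ_{1:(j−1)})`. -/
def gPlus {Ω : Type*} {m n : ℕ} (S V : Fin (n + 1) → Fin m → Ω → ℝ) (Vmax : Fin m → ℝ)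
    (j : Fin m) (lam : Fin m → ℝ) (ω : Ω) : ℝ :=
  (1 / ((n : ℝ) + 1)) * ∑ i : Fin n, lossFn S V j i.castSucc lam ω + Vmax j / ((n : ℝ) + 1)

open ProbabilityTheory Real
open scoped NNReal

/-!
Fix `j` and `λ_{1:(j-1)}`. The loss of datapoint `i` is `W_i · 1{λ_j < T_i}` with the weight
`W_i = V_j^{(i)} · 1{S_l^{(i)} ≤ λ_l for all l < j} ∈ [0, Vmax_j]` and the location
`T_i = S_j^{(i)}`. Hence `λ_j ↦ g_j^*` is the tail `λ_j ↦ ν (λ_j, ∞)` of the finite measure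
`ν = E[W · δ_T]` on `ℝ`, and the empirical risk is the tail of its empirical analogue. As in the
proof of the DKW inequality, monotonicity of tails reduces the supremum over `λ_j` to `2n + 1`
fixed sets, namely `ℝ` and the half-lines `(q_k, ∞)`, `[q_k, ∞)` at the quantiles `q_k` of `ν` of
levels `k · Vmax_j / n`, at the price of an extra `Vmax_j / n`. Hoeffding's inequality and a union
bound control these `2n + 1` deviations at level `√2 · Vmax_j · √(log n / n)` outside an event of
probability `2 (2n + 1) / n⁴ ≤ 2 / √n`, and the bump of `g_j^+` costs at most another `Vmax_j / n`.
-/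

section Quantile

variable {ν : Measure ℝ} [IsFiniteMeasure ν] {q b : ℝ}

lemma measureReal_Ioi_le_of_forall_gt (h : ∀ y, q < y → ν.real (Ioi y) ≤ b) :
    ν.real (Ioi q) ≤ b := by
  have hunion : ⋃ k : ℕ, Ioi (q + 1 / (k + 1)) = Ioi q := by
    ext x
    simp only [mem_iUnion, mem_Ioi]
    refine ⟨fun ⟨k, hk⟩ => lt_trans (by simp; positivity) hk, fun hx => ?_⟩
    obtain ⟨k, hk⟩ := exists_nat_one_div_lt (sub_pos.2 hx)
    exact ⟨k, by linarith⟩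
  have hmono : Monotone fun k : ℕ => Ioi (q + 1 / (k + 1)) := fun k l hkl =>
    Ioi_subset_Ioi (by gcongr)
  have ht := (ENNReal.tendsto_toReal (measure_ne_top ν _)).comp
    (tendsto_measure_iUnion_atTop (μ := ν) hmono)
  rw [hunion] at ht
  exact le_of_tendsto' ht fun k => h _ (lt_add_of_pos_right q (by positivity))

lemma le_measureReal_Ici_of_forall_lt (h : ∀ y, y < q → b ≤ ν.real (Ioi y)) :
    b ≤ ν.real (Ici q) := by
  have hinter : ⋂ k : ℕ, Ioi (q - 1 / (k + 1)) = Ici q := by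
    ext x
    simp only [mem_iInter, mem_Ioi, mem_Ici]
    refine ⟨fun hx => le_of_not_gt fun hxq => ?_, fun hx k => by
      have : (0 : ℝ) < 1 / (k + 1) := by positivity
      linarith⟩
    obtain ⟨k, hk⟩ := exists_nat_one_div_lt (sub_pos.2 hxq)
    linarith [hx k]
  have hanti : Antitone fun k : ℕ => Ioi (q - 1 / (k + 1)) := fun k l hkl =>
    Ioi_subset_Ioi (by gcongr)
  have ht := (ENNReal.tendsto_toReal (measure_ne_top ν _)).comp
    (tendsto_measure_iInter_atTop (μ := ν) (fun _ => measurableSet_Ioi.nullMeasurableSet) hanti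
      ⟨0, measure_ne_top _ _⟩)
  rw [hinter] at ht
  exact ge_of_tendsto' ht fun k => h _ (sub_lt_self q (by positivity))

theorem exists_measureReal_Ioi_le_le_measureReal_Ici (hb0 : 0 < b) (hb : b < ν.real univ) :
    ∃ q, ν.real (Ioi q) ≤ b ∧ b ≤ ν.real (Ici q) := by
  set A := {x | b < ν.real (Ioi x)}
  have hne : A.Nonempty := by
    obtain ⟨x, hx⟩ := ((ENNReal.tendsto_toReal (measure_ne_top ν univ)).comp
      (tendsto_measure_Ici_atBot ν) |>.eventually (lt_mem_nhds hb)).exists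
    exact ⟨x - 1, hx.trans_le (measureReal_mono (Ici_subset_Ioi.2 (by linarith)))⟩
  have hbdd : BddAbove A := by
    obtain ⟨x, hx⟩ := ((ENNReal.tendsto_toReal (measure_ne_top ν univ)).comp
      (tendsto_measure_Iic_atTop ν) |>.eventually (lt_mem_nhds (sub_lt_self _ hb0))).exists
    change ν.real univ - b < ν.real (Iic x) at hx
    have hIoi : ν.real (Ioi x) < b := by
      rw [← compl_Iic, measureReal_compl measurableSet_Iic]
      linarith
    exact ⟨x, fun y hy => le_of_not_gt fun hxy =>
      (hy.trans_le (measureReal_mono (Ioi_subset_Ioi hxy.le))).not_gt hIoi⟩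
  refine ⟨sSup A, measureReal_Ioi_le_of_forall_gt fun y hy => ?_,
    le_measureReal_Ici_of_forall_lt fun y hy => ?_⟩
  · exact not_lt.1 fun hyA => (le_csSup hbdd hyA).not_gt hy
  · obtain ⟨a, ha, hya⟩ := exists_lt_of_lt_csSup hne hy
    exact ha.le.trans (measureReal_mono (Ioi_subset_Ioi hya.le))

end Quantile

section Bracketing

lemma exists_nat_lt_mul_le_add {δ g : ℝ} (hδ : 0 < δ) (hg : 0 ≤ g) :
    ∃ k : ℕ, 0 < k ∧ g < k * δ ∧ k * δ ≤ g + δ := by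
  refine ⟨⌊g / δ⌋₊ + 1, Nat.succ_pos _, ?_, ?_⟩
  · rw [← div_lt_iff₀ hδ]
    exact_mod_cast Nat.lt_floor_add_one (g / δ)
  · have := Nat.floor_le (div_nonneg hg hδ.le)
    rw [le_div_iff₀ hδ] at this
    push_cast
    linarith

lemma exists_nat_mul_lt_le_add {δ g : ℝ} (hδ : 0 < δ) (hg : δ < g) :
    ∃ k : ℕ, 0 < k ∧ k * δ < g ∧ g ≤ k * δ + δ := by
  have hpos : 0 < g / δ - 1 := by rwa [sub_pos, one_lt_div hδ]
  refine ⟨⌈g / δ - 1⌉₊, Nat.ceil_pos.2 hpos, ?_, ?_⟩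
  · have := Nat.ceil_lt_add_one hpos.le
    rw [← lt_div_iff₀ hδ]
    linarith
  · have h := mul_le_mul_of_nonneg_right (Nat.le_ceil (g / δ - 1)) hδ.le
    rw [sub_mul, div_mul_cancel₀ _ hδ.ne', one_mul] at h
    linarith

variable {ν ν' : Measure ℝ} [IsFiniteMeasure ν] [IsFiniteMeasure ν'] {δ ε : ℝ}

lemma measureReal_Ioi_le_add_of_quantiles (hδ : 0 < δ)
    (huniv : ν'.real univ ≤ ν.real univ + ε)
    (hq : ∀ k : ℕ, 0 < k → k * δ < ν.real univ → ∃ q, ν.real (Ioi q) ≤ k * δ ∧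
      k * δ ≤ ν.real (Ici q) ∧ ν'.real (Ioi q) ≤ ν.real (Ioi q) + ε)
    (x : ℝ) : ν'.real (Ioi x) ≤ ν.real (Ioi x) + ε + δ := by
  obtain ⟨k, hk, hlt, hle⟩ := exists_nat_lt_mul_le_add hδ (measureReal_nonneg (s := Ioi x) (μ := ν))
  by_cases hkν : k * δ < ν.real univ
  · obtain ⟨q, hIoi, hIci, hdev⟩ := hq k hk hkν
    have hqx : q ≤ x := le_of_not_gt fun hxq =>
      (hlt.trans_le hIci).not_ge (measureReal_mono (Ici_subset_Ioi.2 hxq))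
    calc ν'.real (Ioi x) ≤ ν'.real (Ioi q) := measureReal_mono (Ioi_subset_Ioi hqx)
      _ ≤ ν.real (Ioi x) + ε + δ := by linarith
  · calc ν'.real (Ioi x) ≤ ν'.real univ := measureReal_mono (subset_univ _)
      _ ≤ ν.real (Ioi x) + ε + δ := by linarith

lemma measureReal_Ioi_le_add_of_quantiles_Ici (hδ : 0 < δ) (hε : 0 ≤ ε)
    (hq : ∀ k : ℕ, 0 < k → k * δ < ν.real univ → ∃ q, ν.real (Ioi q) ≤ k * δ ∧
      k * δ ≤ ν.real (Ici q) ∧ ν.real (Ici q) ≤ ν'.real (Ici q) + ε)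
    (x : ℝ) : ν.real (Ioi x) ≤ ν'.real (Ioi x) + ε + δ := by
  by_cases hsmall : ν.real (Ioi x) ≤ δ
  · linarith [measureReal_nonneg (s := Ioi x) (μ := ν')]
  obtain ⟨k, hk, hlt, hle⟩ := exists_nat_mul_lt_le_add hδ (not_le.1 hsmall)
  obtain ⟨q, hIoi, hIci, hdev⟩ := hq k hk (hlt.trans_le (measureReal_mono (subset_univ _)))
  have hxq : x < q := lt_of_not_ge fun hqx =>
    (hlt.trans_le (measureReal_mono (Ioi_subset_Ioi hqx))).not_ge hIoi
  calc ν.real (Ioi x) ≤ ν'.real (Ici q) + ε + δ := by linarith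
    _ ≤ ν'.real (Ioi x) + ε + δ := by grw [measureReal_mono (Ici_subset_Ioi.2 hxq)]

theorem abs_measureReal_Ioi_sub_le_of_quantiles (hδ : 0 < δ)
    (huniv : |ν'.real univ - ν.real univ| ≤ ε)
    (hq : ∀ k : ℕ, 0 < k → k * δ < ν.real univ → ∃ q, ν.real (Ioi q) ≤ k * δ ∧
      k * δ ≤ ν.real (Ici q) ∧ |ν'.real (Ioi q) - ν.real (Ioi q)| ≤ ε ∧
      |ν'.real (Ici q) - ν.real (Ici q)| ≤ ε)
    (x : ℝ) : |ν'.real (Ioi x) - ν.real (Ioi x)| ≤ ε + δ := by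
  have hupper := measureReal_Ioi_le_add_of_quantiles (ν := ν) (ν' := ν') (ε := ε) hδ
    (by linarith [(abs_le.1 huniv).2]) (fun k hk hkν => by
      obtain ⟨q, h1, h2, h3, -⟩ := hq k hk hkν
      exact ⟨q, h1, h2, by linarith [(abs_le.1 h3).2]⟩) x
  have hlower := measureReal_Ioi_le_add_of_quantiles_Ici (ν := ν) (ν' := ν') (ε := ε) hδ
    ((abs_nonneg _).trans huniv) (fun k hk hkν => by
      obtain ⟨q, h1, h2, -, h4⟩ := hq k hk hkν
      exact ⟨q, h1, h2, by linarith [(abs_le.1 h4).1]⟩) x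
  rw [abs_sub_le_iff]
  constructor <;> linarith

end Bracketing

section WeightedLaw

-- A pair `p : ℝ × ℝ` is a weight `p.1` placed at the location `p.2`.
def weightOn (S : Set ℝ) : ℝ × ℝ → ℝ := (Prod.snd ⁻¹' S).indicator Prod.fst

def weightedLaw (P : Measure (ℝ × ℝ)) : Measure ℝ :=
  (P.withDensity fun p => ENNReal.ofReal p.1).map Prod.snd

def empiricalMeasure {ι α : Type*} [Fintype ι] [MeasurableSpace α] (x : ι → α) : Measure α :=
  (Fintype.card ι : ℝ≥0)⁻¹ • ∑ i, Measure.dirac (x i)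

lemma measurable_weightOn {S : Set ℝ} (hS : MeasurableSet S) : Measurable (weightOn S) :=
  measurable_fst.indicator (measurable_snd hS)

lemma weightOn_mem_Icc {S : Set ℝ} {p : ℝ × ℝ} {c : ℝ} (hp : p.1 ∈ Icc 0 c) :
    weightOn S p ∈ Icc 0 c := by
  unfold weightOn indicator
  split_ifs
  exacts [hp, ⟨le_rfl, hp.1.trans hp.2⟩]

lemma integral_weightOn_mem_Icc {P : Measure (ℝ × ℝ)} [IsProbabilityMeasure P] {c : ℝ}
    (hP : ∀ᵐ p ∂P, p.1 ∈ Icc 0 c) (S : Set ℝ) : ∫ p, weightOn S p ∂P ∈ Icc 0 c := by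
  have hw : ∀ᵐ p ∂P, weightOn S p ∈ Icc 0 c := hP.mono fun p => weightOn_mem_Icc
  refine ⟨integral_nonneg_of_ae (hw.mono fun p hp => hp.1), ?_⟩
  simpa using integral_mono_of_nonneg (hw.mono fun p hp => hp.1) (integrable_const c)
    (hw.mono fun p hp => hp.2)

variable {P : Measure (ℝ × ℝ)}

lemma isFiniteMeasure_weightedLaw (h : Integrable Prod.fst P) : IsFiniteMeasure (weightedLaw P) :=
  have := isFiniteMeasure_withDensity_ofReal h.hasFiniteIntegral
  Measure.isFiniteMeasure_map _ _

lemma measureReal_weightedLaw (hint : Integrable Prod.fst P) (hnn : 0 ≤ᵐ[P] Prod.fst)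
    {S : Set ℝ} (hS : MeasurableSet S) : (weightedLaw P).real S = ∫ p, weightOn S p ∂P := by
  have hS' : MeasurableSet (Prod.snd ⁻¹' S : Set (ℝ × ℝ)) := measurable_snd hS
  rw [weightOn, integral_indicator hS', measureReal_def, weightedLaw,
    Measure.map_apply (measurable_snd (α := ℝ)) hS, withDensity_apply _ hS',
    ← ofReal_integral_eq_lintegral_ofReal hint.restrict (ae_restrict_of_ae hnn),
    ENNReal.toReal_ofReal (setIntegral_nonneg_of_ae_restrict (ae_restrict_of_ae hnn))]

variable {ι α : Type*} [Fintype ι] [MeasurableSpace α] [MeasurableSingletonClass α]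

lemma integral_empiricalMeasure (x : ι → α) (f : α → ℝ) :
    ∫ a, f a ∂(empiricalMeasure x) = (∑ i, f (x i)) / Fintype.card ι := by
  rw [empiricalMeasure, integral_smul_nnreal_measure, integral_finsetSum_measure]
  · simp [integral_dirac, div_eq_inv_mul, NNReal.smul_def]
  · exact fun i _ => integrable_dirac (by simp)

lemma integrable_empiricalMeasure (x : ι → α) (f : α → ℝ) : Integrable f (empiricalMeasure x) :=
  (integrable_finsetSum_measure.2 fun i _ => integrable_dirac (by simp)).smul_measure_nnreal

lemma ae_empiricalMeasure_of_forall {x : ι → α} {p : α → Prop} (h : ∀ i, p (x i)) :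
    ∀ᵐ a ∂(empiricalMeasure x), p a := by
  simp [empiricalMeasure, ae_iff, Measure.dirac_apply, h]

end WeightedLaw

lemma abs_sum_sub_eq_card_mul_abs_div_sub {ι : Type*} [Fintype ι] [Nonempty ι] (a : ι → ℝ)
    (m : ℝ) : |∑ i, (a i - m)| = Fintype.card ι * |(∑ i, a i) / Fintype.card ι - m| := by
  have hN : (0 : ℝ) < Fintype.card ι := by exact_mod_cast Fintype.card_pos
  rw [Finset.sum_sub_distrib, Finset.sum_const, Finset.card_univ, nsmul_eq_mul,
    ← abs_of_pos hN, ← abs_mul, abs_of_pos hN, mul_sub, mul_div_cancel₀ _ hN.ne']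

lemma one_sub_measureReal_le_of_compl_subset {Ω : Type*} [MeasurableSpace Ω] {μ : Measure Ω}
    [IsProbabilityMeasure μ] {s t : Set Ω} (h : sᶜ ⊆ t) : 1 - μ.real s ≤ μ.real t := by
  have := measureReal_union_le (μ := μ) s sᶜ
  rw [union_compl_self, probReal_univ] at this
  linarith [measureReal_mono (μ := μ) h]

theorem measureReal_le_abs_sum_sub_integral_le {Ω ι : Type*} [MeasurableSpace Ω] {μ : Measure Ω}
    [IsProbabilityMeasure μ] {Z : ι → Ω → ℝ} (hindep : iIndepFun Z μ)
    (hmeas : ∀ i, AEMeasurable (Z i) μ) {a b : ℝ} (hZ : ∀ i, ∀ᵐ ω ∂μ, Z i ω ∈ Icc a b)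
    (s : Finset ι) {ε : ℝ} (hε : 0 ≤ ε) :
    μ.real {ω | ε ≤ |∑ i ∈ s, (Z i ω - μ[Z i])|}
      ≤ 2 * exp (-2 * ε ^ 2 / (s.card * (b - a) ^ 2)) := by
  set Y : ι → Ω → ℝ := fun i ω => Z i ω - μ[Z i]
  have hsubG : ∀ i, HasSubgaussianMGF (Y i) ((‖b - a‖₊ / 2) ^ 2) μ := fun i =>
    hasSubgaussianMGF_of_mem_Icc (hmeas i) (hZ i)
  have hY : iIndepFun Y μ :=
    hindep.comp (fun i (x : ℝ) => x - ∫ ω, Z i ω ∂μ) fun _ => measurable_id.sub_const _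
  have hexp : -ε ^ 2 / (2 * ((∑ i ∈ s, (‖b - a‖₊ / 2) ^ 2 : ℝ≥0) : ℝ))
      = -2 * ε ^ 2 / (s.card * (b - a) ^ 2) := by
    push_cast
    rw [Finset.sum_const, nsmul_eq_mul, Real.norm_eq_abs, div_pow, sq_abs,
      show (2 : ℝ) * (s.card * ((b - a) ^ 2 / 2 ^ 2)) = s.card * (b - a) ^ 2 / 2 by ring,
      div_div_eq_mul_div]
    ring
  have hupper := HasSubgaussianMGF.measure_sum_ge_le_of_iIndepFun hY (s := s)
    (fun i _ => hsubG i) hε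
  have hlower := HasSubgaussianMGF.measure_sum_ge_le_of_iIndepFun (X := fun i => -Y i)
    (hY.comp (fun _ x => -x) fun _ => measurable_neg) (s := s) (fun i _ => (hsubG i).neg) hε
  rw [hexp] at hupper hlower
  calc μ.real {ω | ε ≤ |∑ i ∈ s, Y i ω|}
      ≤ μ.real ({ω | ε ≤ ∑ i ∈ s, Y i ω} ∪ {ω | ε ≤ ∑ i ∈ s, (-Y i) ω}) := by
        refine measureReal_mono fun ω hω => ?_
        simp only [mem_ofPred_eq, mem_union, Pi.neg_apply, Finset.sum_neg_distrib] at hω ⊢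
        exact le_abs.1 hω
    _ ≤ _ := (measureReal_union_le _ _).trans (by linarith)

section UniformDeviation

def quantileTestSets (q : ℕ → ℝ) (N : ℕ) : Finset (Set ℝ) :=
  insert univ ((Finset.range N).image (fun k => Ioi (q k)) ∪
    (Finset.range N).image (fun k => Ici (q k)))

lemma measurableSet_of_mem_quantileTestSets {q : ℕ → ℝ} {N : ℕ} {S : Set ℝ}
    (hS : S ∈ quantileTestSets q N) : MeasurableSet S := by
  simp only [quantileTestSets, Finset.mem_insert, Finset.mem_union, Finset.mem_image] at hS
  rcases hS with rfl | ⟨k, -, rfl⟩ | ⟨k, -, rfl⟩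
  exacts [MeasurableSet.univ, measurableSet_Ioi, measurableSet_Ici]

lemma card_quantileTestSets_le (q : ℕ → ℝ) (N : ℕ) : (quantileTestSets q N).card ≤ 2 * N + 1 := by
  refine (Finset.card_insert_le _ _).trans (Nat.succ_le_succ ((Finset.card_union_le _ _).trans ?_))
  grw [Finset.card_image_le, Finset.card_image_le, Finset.card_range]
  omega

variable {ι : Type*} [Fintype ι] [Nonempty ι] {P : Measure (ℝ × ℝ)} {c : ℝ}

theorem abs_integral_weightOn_Ioi_sub_le_of_quantileTestSets [IsProbabilityMeasure P]
    (hP : ∀ᵐ p ∂P, p.1 ∈ Icc 0 c) (hc : 0 < c) {ε : ℝ} {q : ℕ → ℝ}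
    (hq : ∀ k : ℕ, 0 < k * (c / Fintype.card ι) →
      k * (c / Fintype.card ι) < (weightedLaw P).real univ →
      (weightedLaw P).real (Ioi (q k)) ≤ k * (c / Fintype.card ι) ∧
        k * (c / Fintype.card ι) ≤ (weightedLaw P).real (Ici (q k)))
    {w : ι → ℝ × ℝ} (hw : ∀ i, 0 ≤ (w i).1)
    (hdev : ∀ S ∈ quantileTestSets q (Fintype.card ι),
      |∫ p, weightOn S p ∂(empiricalMeasure w) - ∫ p, weightOn S p ∂P| ≤ ε) (x : ℝ) :
    |∫ p, weightOn (Ioi x) p ∂(empiricalMeasure w) - ∫ p, weightOn (Ioi x) p ∂P|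
      ≤ ε + c / Fintype.card ι := by
  set N := Fintype.card ι
  have hN : (0 : ℝ) < N := by exact_mod_cast Fintype.card_pos
  have hPint : Integrable Prod.fst P := Integrable.of_mem_Icc 0 c measurable_fst.aemeasurable hP
  have hPnn : 0 ≤ᵐ[P] Prod.fst := hP.mono fun p hp => hp.1
  have hwint := integrable_empiricalMeasure w Prod.fst
  have hwnn : 0 ≤ᵐ[empiricalMeasure w] Prod.fst := ae_empiricalMeasure_of_forall hw
  have := isFiniteMeasure_weightedLaw hPint
  have := isFiniteMeasure_weightedLaw hwint
  have hreal : ∀ S ∈ quantileTestSets q N,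
      |(weightedLaw (empiricalMeasure w)).real S - (weightedLaw P).real S| ≤ ε := fun S hS => by
    rw [measureReal_weightedLaw hwint hwnn (measurableSet_of_mem_quantileTestSets hS),
      measureReal_weightedLaw hPint hPnn (measurableSet_of_mem_quantileTestSets hS)]
    exact hdev S hS
  have hrange : ∀ k : ℕ, k * (c / N) < (weightedLaw P).real univ → k ∈ Finset.range N := by
    intro k hk
    have huniv := (integral_weightOn_mem_Icc hP univ).2
    rw [← measureReal_weightedLaw hPint hPnn MeasurableSet.univ] at huniv
    rw [Finset.mem_range, ← Nat.cast_lt (α := ℝ)]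
    rw [mul_div_assoc', div_lt_iff₀ hN] at hk
    nlinarith
  have := abs_measureReal_Ioi_sub_le_of_quantiles (by positivity : 0 < c / N)
    (hreal univ (Finset.mem_insert_self _ _)) (fun k hk hkρ => by
      obtain ⟨hIoi, hIci⟩ := hq k (by positivity) hkρ
      exact ⟨q k, hIoi, hIci, hreal _ (Finset.mem_insert_of_mem (Finset.mem_union_left _
        (Finset.mem_image_of_mem _ (hrange k hkρ)))), hreal _ (Finset.mem_insert_of_mem
        (Finset.mem_union_right _ (Finset.mem_image_of_mem _ (hrange k hkρ))))⟩) x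
  rwa [measureReal_weightedLaw hwint hwnn measurableSet_Ioi,
    measureReal_weightedLaw hPint hPnn measurableSet_Ioi] at this

variable {Ω : Type*} [MeasurableSpace Ω] {μ : Measure Ω} [IsProbabilityMeasure μ]
  {X : ι → Ω → ℝ × ℝ}

theorem measureReal_lt_abs_integral_weightOn_sub_le (hindep : iIndepFun X μ)
    (hlaw : ∀ i, HasLaw (X i) P μ) (hP : ∀ᵐ p ∂P, p.1 ∈ Icc 0 c) (hc : 0 < c) {S : Set ℝ}
    (hS : MeasurableSet S) {t : ℝ} (ht : 0 ≤ t) :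
    μ.real {ω | c * t < |∫ p, weightOn S p ∂(empiricalMeasure fun i => X i ω)
      - ∫ p, weightOn S p ∂P|} ≤ 2 * exp (-2 * Fintype.card ι * t ^ 2) := by
  have hN : (0 : ℝ) < Fintype.card ι := by exact_mod_cast Fintype.card_pos
  have hmeas := measurable_weightOn hS
  have hmean : ∀ i, ∫ ω, weightOn S (X i ω) ∂μ = ∫ p, weightOn S p ∂P := fun i =>
    (hlaw i).integral_comp hmeas.aestronglyMeasurable
  have hhoeffding := measureReal_le_abs_sum_sub_integral_le
    (hindep.comp (fun _ => weightOn S) fun _ => hmeas)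
    (fun i => hmeas.comp_aemeasurable (hlaw i).aemeasurable)
    (fun i => (((hlaw i).ae_iff (measurableSet_setOfPred.1
      (measurable_fst measurableSet_Icc))).2 hP).mono fun ω => weightOn_mem_Icc)
    Finset.univ (by positivity : 0 ≤ Fintype.card ι * (c * t))
  simp only [Function.comp_apply, hmean, Finset.card_univ,
    abs_sum_sub_eq_card_mul_abs_div_sub] at hhoeffding
  calc _ ≤ μ.real {ω | Fintype.card ι * (c * t) ≤ Fintype.card ι *
        |(∑ i, weightOn S (X i ω)) / Fintype.card ι - ∫ p, weightOn S p ∂P|} := by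
        refine measureReal_mono fun ω hω => ?_
        simp only [mem_ofPred_eq, integral_empiricalMeasure] at hω ⊢
        gcongr
    _ ≤ _ := hhoeffding.trans_eq (by rw [sub_zero]; field_simp)

theorem one_sub_le_measureReal_forall_abs_integral_weightOn_Ioi_sub_le_of_pos
    (hindep : iIndepFun X μ) (hlaw : ∀ i, HasLaw (X i) P μ) (hP : ∀ᵐ p ∂P, p.1 ∈ Icc 0 c)
    (hc : 0 < c) {t : ℝ} (ht : 0 ≤ t) :
    1 - 2 * (2 * Fintype.card ι + 1) * exp (-2 * Fintype.card ι * t ^ 2) ≤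
      μ.real {ω | ∀ x, |∫ p, weightOn (Ioi x) p ∂(empiricalMeasure fun i => X i ω)
        - ∫ p, weightOn (Ioi x) p ∂P| ≤ c * t + c / Fintype.card ι} := by
  set N := Fintype.card ι
  have : IsProbabilityMeasure P := (hlaw (Classical.arbitrary ι)).isProbabilityMeasure_iff.1 ‹_›
  have := isFiniteMeasure_weightedLaw (Integrable.of_mem_Icc 0 c measurable_fst.aemeasurable hP)
  choose! q hq using fun (k : ℕ) (h0 : 0 < (k : ℝ) * (c / N))
    (h1 : (k : ℝ) * (c / N) < (weightedLaw P).real univ) =>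
    exists_measureReal_Ioi_le_le_measureReal_Ici h0 h1
  set B : Set ℝ → Set Ω := fun S =>
    {ω | c * t < |∫ p, weightOn S p ∂(empiricalMeasure fun i => X i ω) - ∫ p, weightOn S p ∂P|}
  set Bad := {ω | ¬ ∀ i, 0 ≤ (X i ω).1} ∪ ⋃ S ∈ quantileTestSets q N, B S
  have hnull : μ.real {ω | ¬ ∀ i, 0 ≤ (X i ω).1} = 0 := by
    refine (measureReal_eq_zero_iff (by finiteness)).2 (ae_iff.1 (ae_all_iff.2 fun i => ?_))
    exact (((hlaw i).ae_iff (measurableSet_setOfPred.1 (measurable_fst measurableSet_Ici))).2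
      (hP.mono fun p hp => hp.1))
  have hBad : μ.real Bad ≤ 2 * (2 * N + 1) * exp (-2 * N * t ^ 2) :=
    calc μ.real Bad ≤ 0 + ∑ S ∈ quantileTestSets q N, μ.real (B S) := by
          grw [measureReal_union_le, hnull, measureReal_biUnion_finset_le]
      _ ≤ (quantileTestSets q N).card * (2 * exp (-2 * N * t ^ 2)) := by
          rw [zero_add, ← nsmul_eq_mul]
          exact Finset.sum_le_card_nsmul _ _ _ fun S hS =>
            measureReal_lt_abs_integral_weightOn_sub_le hindep hlaw hP hc
              (measurableSet_of_mem_quantileTestSets hS) ht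
      _ ≤ 2 * (2 * N + 1) * exp (-2 * N * t ^ 2) := by
          have : ((quantileTestSets q N).card : ℝ) ≤ 2 * N + 1 := by
            exact_mod_cast card_quantileTestSets_le q N
          nlinarith [exp_pos (-2 * N * t ^ 2)]
  refine (one_sub_measureReal_le_of_compl_subset fun ω hω => ?_).trans' (by linarith)
  simp only [Bad, B, compl_union, mem_inter_iff, mem_compl_iff, mem_ofPred_eq, not_not, mem_iUnion,
    not_exists, not_lt] at hω
  exact abs_integral_weightOn_Ioi_sub_le_of_quantileTestSets hP hc hq hω.1 hω.2

theorem one_sub_le_measureReal_forall_abs_integral_weightOn_Ioi_sub_le (hindep : iIndepFun X μ)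
    (hlaw : ∀ i, HasLaw (X i) P μ) (hP : ∀ᵐ p ∂P, p.1 ∈ Icc 0 c) (hc : 0 ≤ c) {t : ℝ}
    (ht : 0 ≤ t) :
    1 - 2 * (2 * Fintype.card ι + 1) * exp (-2 * Fintype.card ι * t ^ 2) ≤
      μ.real {ω | ∀ x, |∫ p, weightOn (Ioi x) p ∂(empiricalMeasure fun i => X i ω)
        - ∫ p, weightOn (Ioi x) p ∂P| ≤ c * t + c / Fintype.card ι} := by
  rcases hc.eq_or_lt with rfl | hc
  · have hP0 : ∀ᵐ p ∂P, p.1 = 0 := hP.mono fun p hp => le_antisymm hp.2 hp.1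
    have hW0 : ∀ᵐ ω ∂μ, ∀ i, (X i ω).1 = 0 := ae_all_iff.2 fun i => ((hlaw i).ae_iff
      (measurableSet_setOfPred.1 (measurable_fst (measurableSet_singleton 0)))).2 hP0
    have hweightOn0 : ∀ {S : Set ℝ} {p : ℝ × ℝ}, p.1 = 0 → weightOn S p = 0 := fun hp => by
      simp [weightOn, indicator, hp]
    refine (one_sub_measureReal_le_of_compl_subset (s := {ω | ¬ ∀ i, (X i ω).1 = 0})
      fun ω hω => ?_).trans' ?_
    · simp only [mem_compl_iff, mem_ofPred_eq, not_not] at hω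
      intro x
      rw [integral_empiricalMeasure, integral_eq_zero_of_ae (hP0.mono fun p => hweightOn0)]
      simp [hweightOn0 (hω _)]
    · rw [(measureReal_eq_zero_iff (by finiteness)).2 (ae_iff.1 hW0), sub_zero]
      exact sub_le_self 1 (by positivity)
  · exact one_sub_le_measureReal_forall_abs_integral_weightOn_Ioi_sub_le_of_pos hindep hlaw hP hc ht

end UniformDeviation

lemma hasLaw_comp_map_comp {Ω ι β γ : Type*} [MeasurableSpace Ω] [MeasurableSpace β]
    [MeasurableSpace γ] {μ : Measure Ω} {D : ι → Ω → β} (hD : ∀ i, Measurable (D i)) {i₀ : ι}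
    (hident : ∀ i, μ.map (D i) = μ.map (D i₀)) {g : β → γ} (hg : Measurable g) (i k : ι) :
    HasLaw (g ∘ D i) (μ.map (g ∘ D k)) μ :=
  ⟨(hg.comp (hD i)).aemeasurable, by
    rw [← Measure.map_map hg (hD i), ← Measure.map_map hg (hD k), hident i, hident k]⟩

section Application

variable {Ω : Type*} {m n : ℕ} (S V : Fin (n + 1) → Fin m → Ω → ℝ) (j : Fin m) (lam : Fin m → ℝ)

def datapoint (i : Fin (n + 1)) (ω : Ω) : (Fin m → ℝ) × (Fin m → ℝ) :=
  ((fun l => S i l ω), fun l => V i l ω)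

/-- The weight and location of a datapoint `d = (S, V)` at stage `j`: its cost `V_j` if it
reaches stage `j` under the thresholds `lam`, and its score `S_j`. -/
def gatedCostScore (d : (Fin m → ℝ) × (Fin m → ℝ)) : ℝ × ℝ :=
  (d.2 j * (if ∀ l, l < j → d.1 l ≤ lam l then 1 else 0), d.1 j)

lemma measurable_gatedCostScore : Measurable (gatedCostScore j lam) := by
  have hset : MeasurableSet {d : (Fin m → ℝ) × (Fin m → ℝ) | ∀ l, l < j → d.1 l ≤ lam l} := by
    simp only [ofPred_forall]
    exact .iInter fun l => .iInter fun _ => measurableSet_le (by fun_prop) measurable_const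
  exact ((by fun_prop : Measurable fun d : (Fin m → ℝ) × (Fin m → ℝ) => d.2 j).mul
    (Measurable.ite hset measurable_const measurable_const)).prodMk (by fun_prop)

lemma lossFn_update_eq_weightOn_gatedCostScore (i : Fin (n + 1)) (x : ℝ) (ω : Ω) :
    lossFn S V j i (Function.update lam j x) ω
      = weightOn (Ioi x) (gatedCostScore j lam (datapoint S V i ω)) := by
  have hgate : (∀ l, l < j → S i l ω ≤ Function.update lam j x l) ↔ ∀ l, l < j → S i l ω ≤ lam l :=
    forall_congr' fun l => imp_congr_right fun hl => by rw [Function.update_of_ne hl.ne]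
  simp only [lossFn, Function.update_self, hgate, gatedCostScore, datapoint, weightOn, indicator,
    mem_preimage, mem_Ioi]
  by_cases hA : ∀ l, l < j → S i l ω ≤ lam l
  · simp [eq_true hA]
  · simp [eq_false hA]

lemma gPlus_update_eq (Vmax : Fin m → ℝ) (x : ℝ) (ω : Ω) :
    gPlus S V Vmax j (Function.update lam j x) ω = 1 / (n + 1) *
      ∑ i : Fin n, weightOn (Ioi x) (gatedCostScore j lam (datapoint S V i.castSucc ω))
        + Vmax j / (n + 1) := by
  simp only [gPlus, lossFn_update_eq_weightOn_gatedCostScore]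

variable [MeasurableSpace Ω] {μ : Measure Ω}

lemma gStar_update_eq_integral (hD : Measurable (datapoint S V (Fin.last n))) (x : ℝ) :
    gStar μ S V j (Function.update lam j x)
      = ∫ p, weightOn (Ioi x) p ∂(μ.map (gatedCostScore j lam ∘ datapoint S V (Fin.last n))) := by
  rw [gStar, integral_map ((measurable_gatedCostScore j lam).comp hD).aemeasurable
    (measurable_weightOn measurableSet_Ioi).aestronglyMeasurable]
  simp only [lossFn_update_eq_weightOn_gatedCostScore, Function.comp_apply]

lemma ae_gatedCostScore_fst_mem_Icc {i : Fin (n + 1)} {vmin vmax : ℝ} (hvmin : 0 ≤ vmin)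
    (hV : ∀ᵐ ω ∂μ, V i j ω ∈ Icc vmin vmax) :
    ∀ᵐ ω ∂μ, (gatedCostScore j lam (datapoint S V i ω)).1 ∈ Icc 0 vmax := by
  filter_upwards [hV] with ω hω
  change V i j ω * (if ∀ l, l < j → S i l ω ≤ lam l then 1 else 0) ∈ Icc 0 vmax
  split_ifs
  · simpa using ⟨hvmin.trans hω.1, hω.2⟩
  · simpa using (hvmin.trans hω.1).trans hω.2

end Application

lemma abs_bumped_mean_sub_le {n A G c : ℝ} (hn : 0 < n) (hG : G ∈ Icc 0 c) :
    |1 / (n + 1) * A + c / (n + 1) - G| ≤ |A / n - G| + c / (n + 1) := by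
  have hsplit : 1 / (n + 1) * A + c / (n + 1) - G
      = n / (n + 1) * (A / n - G) + (c - G) / (n + 1) := by
    field_simp
    ring
  rw [hsplit]
  refine (abs_add_le _ _).trans (add_le_add ?_ ?_)
  · rw [abs_mul, abs_of_pos (by positivity : 0 < n / (n + 1))]
    exact mul_le_of_le_one_left (abs_nonneg _) ((div_le_one (by positivity)).2 (by linarith))
  · rw [abs_of_nonneg (div_nonneg (by linarith [hG.2]) (by positivity))]
    gcongr
    linarith [hG.1]

lemma one_div_le_sqrt_log_div {n : ℕ} (hn : 2 ≤ n) : 1 / (n : ℝ) ≤ √(log n / n) := by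
  have hn' : (2 : ℝ) ≤ n := by exact_mod_cast hn
  have hlog : log 2 ≤ log n := log_le_log (by norm_num) hn'
  have hlog2 := log_two_gt_d9
  refine le_sqrt_of_sq_le ?_
  rw [div_pow, one_pow, div_le_div_iff₀ (by positivity) (by positivity)]
  nlinarith

lemma two_mul_two_mul_add_one_mul_exp_le_two_div_sqrt {n : ℕ} (hn : 2 ≤ n) :
    2 * (2 * n + 1) * exp (-2 * n * (√2 * √(log n / n)) ^ 2) ≤ 2 / √n := by
  have hn' : (2 : ℝ) ≤ n := by exact_mod_cast hn
  have hlog : 0 ≤ log n / n := div_nonneg (log_nonneg (by linarith)) (by positivity)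
  have hexp : exp (-2 * n * (√2 * √(log n / n)) ^ 2) = ((n : ℝ) ^ 4)⁻¹ := by
    rw [mul_pow, sq_sqrt zero_le_two, sq_sqrt hlog,
      show -2 * (n : ℝ) * (2 * (log n / n)) = -(4 * log n) by field_simp; ring,
      exp_neg, show (4 : ℝ) * log n = log (n ^ 4) by rw [log_pow]; norm_num,
      exp_log (by positivity)]
  have hsqrt : √(n : ℝ) ≤ n := (sqrt_le_left (by positivity)).2 (by nlinarith)
  rw [hexp, le_div_iff₀ (sqrt_pos.2 (by linarith))]
  calc 2 * (2 * n + 1) * ((n : ℝ) ^ 4)⁻¹ * √n ≤ 2 * (2 * n + 1) * ((n : ℝ) ^ 4)⁻¹ * n := by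
        gcongr
    _ ≤ 2 := by
      have hcube : 2 * (n : ℝ) + 1 ≤ n ^ 3 := by
        nlinarith [mul_le_mul hn' hn' zero_le_two (by positivity)]
      rw [mul_right_comm, ← div_eq_mul_inv, div_le_iff₀ (by positivity)]
      nlinarith [mul_le_mul_of_nonneg_left hcube (by positivity : (0 : ℝ) ≤ n)]

lemma mul_sqrt_two_mul_add_div_add_div_le {n : ℕ} (hn : 2 ≤ n) {c : ℝ} (hc : 0 ≤ c) :
    c * (√2 * √(log n / n)) + c / n + c / (n + 1) ≤ (16 * √2 + 2) * c * √(log n / n) := by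
  have h1 : c / (n + 1) ≤ c / n := by gcongr; linarith
  have h2 : c / n ≤ c * √(log n / n) := by
    rw [div_eq_mul_one_div]
    gcongr
    exact one_div_le_sqrt_log_div hn
  have h3 : 0 ≤ c * √2 * √(log n / n) := by positivity
  linarith

theorem empirical_process_bound_general
    {Ω : Type*} [MeasurableSpace Ω] (μ : Measure Ω) [IsProbabilityMeasure μ]
    (m n : ℕ) (hn : 2 ≤ n)
    (S V : Fin (n + 1) → Fin m → Ω → ℝ)
    (hSmeas : ∀ i j, Measurable (S i j)) (hVmeas : ∀ i j, Measurable (V i j))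
    -- i.i.d. datapoints
    (hindep : ProbabilityTheory.iIndepFun
      (fun i ω => ((fun j => S i j ω), (fun j => V i j ω))) μ)
    (hident : ∀ i : Fin (n + 1),
      Measure.map (fun ω => ((fun j => S i j ω), (fun j => V i j ω))) μ
        = Measure.map (fun ω =>
            ((fun j => S 0 j ω), (fun j => V 0 j ω))) μ)
    -- bounded costs
    (Vmin Vmax : Fin m → ℝ) (hVmin0 : ∀ j, 0 ≤ Vmin j) (hVle : ∀ j, Vmin j ≤ Vmax j)
    (hVbd : ∀ i j, ∀ᵐ ω ∂μ, V i j ω ∈ Icc (Vmin j) (Vmax j)) :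
    ∀ (j : Fin m) (lam : Fin m → ℝ),
      1 - 2 / Real.sqrt n
        ≤ (μ {ω | ∀ x : ℝ,
            |gPlus S V Vmax j (Function.update lam j x) ω
              - gStar μ S V j (Function.update lam j x)|
              ≤ (16 * Real.sqrt 2 + 2) * Vmax j * Real.sqrt (Real.log n / n)}).toReal := by
  intro j lam
  have hD : ∀ i, Measurable (datapoint S V i) := fun i =>
    (measurable_pi_lambda _ (hSmeas i)).prodMk (measurable_pi_lambda _ (hVmeas i))
  have hgate := measurable_gatedCostScore j lam
  set P := μ.map (gatedCostScore j lam ∘ datapoint S V (Fin.last n))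
  have hlaw (i : Fin (n + 1)) := hasLaw_comp_map_comp hD hident hgate i (Fin.last n)
  have : IsProbabilityMeasure P := Measure.isProbabilityMeasure_map (hlaw _).aemeasurable
  have hc : 0 ≤ Vmax j := (hVmin0 j).trans (hVle j)
  have hP : ∀ᵐ p ∂P, p.1 ∈ Icc 0 (Vmax j) :=
    (ae_map_iff (hlaw _).aemeasurable (measurable_fst measurableSet_Icc)).2
      (ae_gatedCostScore_fst_mem_Icc S V j lam (hVmin0 j) (hVbd _ j))
  have : Nonempty (Fin n) := ⟨⟨0, by omega⟩⟩
  have hsample := one_sub_le_measureReal_forall_abs_integral_weightOn_Ioi_sub_le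
    (X := fun i : Fin n => gatedCostScore j lam ∘ datapoint S V i.castSucc)
    ((hindep.comp (fun _ => gatedCostScore j lam) fun _ => hgate).precomp
      (Fin.castSucc_injective n)) (fun i => hlaw i.castSucc) hP hc
    (t := √2 * √(log n / n)) (by positivity)
  rw [Fintype.card_fin] at hsample
  refine (hsample.trans' (by linarith [two_mul_two_mul_add_one_mul_exp_le_two_div_sqrt hn])).trans
    (measureReal_mono fun ω hω x => ?_)
  have hmean := hω x
  simp only [integral_empiricalMeasure, Fintype.card_fin, Function.comp_apply] at hmean
  rw [gPlus_update_eq, gStar_update_eq_integral S V j lam (hD _)]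
  calc _ ≤ |(∑ i : Fin n, weightOn (Ioi x) (gatedCostScore j lam (datapoint S V i.castSucc ω)))
          / n - ∫ p, weightOn (Ioi x) p ∂P| + Vmax j / (n + 1) :=
        abs_bumped_mean_sub_le (by positivity) (integral_weightOn_mem_Icc hP _)
    _ ≤ Vmax j * (√2 * √(log n / n)) + Vmax j / n + Vmax j / (n + 1) := by grw [hmean]
    _ ≤ _ := mul_sqrt_two_mul_add_div_add_div_le hn hc

/-- Lemma: empirical process bound for the bumped empirical risk.  Under
i.i.d. datapoints and bounded costs, for each `j`, each `n ≥ 2` and each fixed `λ_{1:(j−1)}`,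
with probability at least `1 − 2/√n`,
`sup_{λ_j} |g_j^+(λ_j; λ_{1:(j−1)}) − g_j^*(λ_j; λ_{1:(j−1)})| ≤ (16√2+2)·Vmax_j·√(log n / n)`. -/
theorem empirical_process_bound
    {Ω : Type*} [MeasurableSpace Ω] (μ : Measure Ω) [IsProbabilityMeasure μ]
    (m n : ℕ) (hm : 1 ≤ m) (hn : 2 ≤ n)
    (S V : Fin (n + 1) → Fin m → Ω → ℝ)
    (hSmeas : ∀ i j, Measurable (S i j)) (hVmeas : ∀ i j, Measurable (V i j))
    -- i.i.d. datapoints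
    (hindep : ProbabilityTheory.iIndepFun
      (fun i ω => ((fun j => S i j ω), (fun j => V i j ω))) μ)
    (hident : ∀ i : Fin (n + 1),
      Measure.map (fun ω => ((fun j => S i j ω), (fun j => V i j ω))) μ
        = Measure.map (fun ω =>
            ((fun j => S 0 j ω), (fun j => V 0 j ω))) μ)
    -- bounded costs
    (Vmin Vmax : Fin m → ℝ) (hVmin0 : ∀ j, 0 ≤ Vmin j) (hVle : ∀ j, Vmin j ≤ Vmax j)
    (hVbd : ∀ i j, ∀ᵐ ω ∂μ, V i j ω ∈ Icc (Vmin j) (Vmax j)) :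
    ∀ (j : Fin m) (lam : Fin m → ℝ),
      1 - 2 / Real.sqrt n
        ≤ (μ {ω | ∀ x : ℝ,
            |gPlus S V Vmax j (Function.update lam j x) ω
              - gStar μ S V j (Function.update lam j x)|
              ≤ (16 * Real.sqrt 2 + 2) * Vmax j * Real.sqrt (Real.log n / n)}).toReal :=
  empirical_process_bound_general μ m n hn S V hSmeas hVmeas hindep hident Vmin Vmax hVmin0 hVle
    hVbd

end
end

section
/- (Value of the population risk at its generalized inverse, and 1-Lipschitz dependence on the level.) Fix j ∈ {1,…,m} and suppose the cumulative distribution function of S_j^{(n+1)} is K_j-Lipschitz for some K_j > 0. Then for every λ_{1:(j−1)} ∈ ℝ^{j−1} and every β ∈ ℝ: g_j^*(U_j^*(λ_{1:(j−1)}; β); λ_{1:(j−1)}) = max{ g_j^*(λ_j^max; λ_{1:(j−1)}), min{ g_j^*(λ_j^min; λ_{1:(j−1)}), β } }. Consequently, for all β, β' ∈ ℝ: |g_j^*(U_j^*(λ_{1:(j−1)}; β); λ_{1:(j−1)}) − g_j^*(U_j^*(λ_{1:(j−1)}; β'); λ_{1:(j−1)})| ≤ |β − β'|. -/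
open MeasureTheory Set

attribute [local instance] Classical.propDecidable

noncomputable section

/-!
As a function of the threshold `x`, the risk `g_j^*(x; λ_{1:(j−1)}) = E[V_j · 1{A, x < S_j}]`
(with `A = {S_l ≤ λ_l for l < j}`) is antitone because `V_j ≥ 0`, and Lipschitz because moving the
threshold from `x` to `y ≥ x` changes the event only by `{x < S_j ≤ y}`, whose probability is at
most `K (y - x)`.

For a continuous antitone `g` and `g c ≤ b < g a`, the supremum `U` of `{x ∈ [a, c] | b < g x}`
satisfies `g U = b`: `g U ≥ b` since `{b ≤ g}` is closed, and `g U ≤ b` since `{b < g}` is open.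
Otherwise `U` is an endpoint of `[a, c]`. Together this is the clamp formula
`g U = max (g c) (min (g a) b)`, and the clamp is `1`-Lipschitz in `b`.
-/

theorem apply_sSup_insert_superlevel_eq {α β : Type*}
    [ConditionallyCompleteLinearOrder α] [TopologicalSpace α] [OrderTopology α] [DenselyOrdered α]
    [LinearOrder β] [TopologicalSpace β] [OrderClosedTopology β]
    {g : α → β} (hg : Continuous g) (hanti : Antitone g) {a c : α} (hac : a ≤ c) (b : β) :
    g (sSup (insert a {x | x ∈ Icc a c ∧ b < g x})) = max (g c) (min (g a) b) := by
  set T := insert a {x | x ∈ Icc a c ∧ b < g x}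
  have hne : T.Nonempty := insert_nonempty _ _
  have hTc : ∀ x ∈ T, x ≤ c := by rintro x (rfl | ⟨hx, -⟩); exacts [hac, hx.2]
  have hbdd : BddAbove T := ⟨c, hTc⟩
  have haU : a ≤ sSup T := le_csSup hbdd (mem_insert _ _)
  have hUc : sSup T ≤ c := csSup_le hne hTc
  rcases lt_or_ge b (g c) with hbc | hcb
  · have hcT : c ∈ T := mem_insert_of_mem _ ⟨⟨hac, le_rfl⟩, hbc⟩
    rw [le_antisymm hUc (le_csSup hbdd hcT), max_eq_left (min_le_right _ _ |>.trans hbc.le)]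
  rcases le_or_gt (g a) b with hab | hba
  · have hUa : sSup T ≤ a := csSup_le hne <| by
      rintro x (rfl | ⟨hx, hbx⟩)
      · exact le_rfl
      · by_contra! hax
        exact (hab.trans_lt hbx).not_ge (hanti hax.le)
    rw [le_antisymm hUa haU, min_eq_left hab, max_eq_right (hanti hac)]
  rw [min_eq_right hba.le, max_eq_right hcb]
  refine le_antisymm ?_ ?_
  · by_contra! hbU
    have hUc' : sSup T < c := hUc.lt_of_ne fun h => hcb.not_gt (h ▸ hbU)
    obtain ⟨u, ⟨hUu, huc⟩, hu⟩ := exists_Ico_subset_of_mem_nhds'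
      ((isOpen_lt continuous_const hg).mem_nhds hbU) hUc'
    obtain ⟨x, hUx, hxu⟩ := exists_between hUu
    have hxT : x ∈ T := mem_insert_of_mem _ ⟨⟨haU.trans hUx.le, hxu.le.trans huc⟩, hu ⟨hUx.le, hxu⟩⟩
    exact (le_csSup hbdd hxT).not_gt hUx
  · have hT : T ⊆ {x | b ≤ g x} := by
      rintro x (rfl | ⟨-, hbx⟩)
      exacts [hba.le, hbx.le]
    exact closure_minimal hT (isClosed_le continuous_const hg) (csSup_mem_closure hne hbdd)

section TailIntegral

variable {Ω : Type*} [MeasurableSpace Ω] {μ : Measure Ω} {A : Set Ω} {S V : Ω → ℝ}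

def tailIntegral (μ : Measure Ω) (A : Set Ω) (S V : Ω → ℝ) (x : ℝ) : ℝ :=
  ∫ ω in A ∩ {ω | x < S ω}, V ω ∂μ

theorem antitone_tailIntegral (hV : Integrable V μ) (hV0 : 0 ≤ᵐ[μ] V) :
    Antitone (tailIntegral μ A S V) := fun _ _ hxy =>
  setIntegral_mono_set hV.integrableOn (ae_restrict_of_ae hV0) <| Filter.Eventually.of_forall
    fun _ hω => ⟨hω.1, hxy.trans_lt hω.2⟩

theorem tailIntegral_sub_le [IsFiniteMeasure μ] (hA : MeasurableSet A) (hS : Measurable S)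
    (hV : Integrable V μ) {M : ℝ} (hVM : ∀ᵐ ω ∂μ, V ω ∈ Icc 0 M) {x y : ℝ} (hxy : x ≤ y) :
    tailIntegral μ A S V x - tailIntegral μ A S V y
      ≤ M * (μ.real {ω | S ω ≤ y} - μ.real {ω | S ω ≤ x}) := by
  have hsub : A ∩ {ω | y < S ω} ⊆ A ∩ {ω | x < S ω} := fun _ hω => ⟨hω.1, hxy.trans_lt hω.2⟩
  have hdiff : (A ∩ {ω | x < S ω}) \ (A ∩ {ω | y < S ω}) ⊆ {ω | S ω ≤ y} \ {ω | S ω ≤ x} := by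
    simp only [subset_def, mem_sdiff, mem_inter_iff, mem_ofPred_eq, not_and, not_lt, not_le]
    exact fun ω ⟨⟨hωA, hxω⟩, hyω⟩ => ⟨hyω hωA, hxω⟩
  calc tailIntegral μ A S V x - tailIntegral μ A S V y
      = ∫ ω in (A ∩ {ω | x < S ω}) \ (A ∩ {ω | y < S ω}), V ω ∂μ :=
        (setIntegral_sdiff (hA.inter (measurableSet_lt measurable_const hS)) hV.integrableOn
          hsub).symm
    _ ≤ ∫ ω in {ω | S ω ≤ y} \ {ω | S ω ≤ x}, V ω ∂μ :=
        setIntegral_mono_set hV.integrableOn (ae_restrict_of_ae (hVM.mono fun _ hω => hω.1))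
          (Filter.Eventually.of_forall hdiff)
    _ ≤ M * μ.real ({ω | S ω ≤ y} \ {ω | S ω ≤ x}) :=
        (le_abs_self _).trans <| norm_setIntegral_le_of_norm_le_const_ae' (measure_lt_top _ _) <|
          hVM.mono fun ω hω _ => by rw [Real.norm_of_nonneg hω.1]; exact hω.2
    _ = M * (μ.real {ω | S ω ≤ y} - μ.real {ω | S ω ≤ x}) := by
        have hle : {ω | S ω ≤ x} ⊆ {ω | S ω ≤ y} := fun _ hω => le_trans hω hxy
        rw [measureReal_sdiff hle (measurableSet_le hS measurable_const)]

theorem lipschitzWith_tailIntegral [IsFiniteMeasure μ] (hA : MeasurableSet A)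
    (hS : Measurable S) (hV : Integrable V μ) {M : ℝ} (hM : 0 ≤ M)
    (hVM : ∀ᵐ ω ∂μ, V ω ∈ Icc 0 M) {K : ℝ}
    (hK : ∀ s t : ℝ, |μ.real {ω | S ω ≤ s} - μ.real {ω | S ω ≤ t}| ≤ K * |s - t|) :
    LipschitzWith (M * K).toNNReal (tailIntegral μ A S V) := by
  have hK0 : 0 ≤ K := by simpa using (abs_nonneg _).trans (hK 1 0)
  refine LipschitzWith.of_le_add_mul' _ fun x y => ?_
  rcases le_total x y with hxy | hyx
  · have hcdf : μ.real {ω | S ω ≤ y} - μ.real {ω | S ω ≤ x} ≤ K * dist x y := by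
      rw [Real.dist_eq, abs_sub_comm]
      exact (le_abs_self _).trans (hK y x)
    nlinarith [tailIntegral_sub_le hA hS hV hVM hxy]
  · linarith [antitone_tailIntegral (A := A) (S := S) hV (hVM.mono fun _ hω => hω.1) hyx,
      mul_nonneg (mul_nonneg hM hK0) (dist_nonneg (x := x) (y := y))]

end TailIntegral

theorem measurableSet_forall_lt_le {Ω ι : Type*} [MeasurableSpace Ω] [Countable ι] [LT ι]
    {f : ι → Ω → ℝ} (hf : ∀ l, Measurable (f l)) (j : ι) (c : ι → ℝ) :
    MeasurableSet {ω | ∀ l < j, f l ω ≤ c l} := by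
  simp only [ofPred_forall]
  exact .iInter fun l => .iInter fun _ => measurableSet_le (hf l) measurable_const

theorem gStar_update_eq_tailIntegral {Ω : Type*} [MeasurableSpace Ω] {m n : ℕ} (μ : Measure Ω)
    (S V : Fin (n + 1) → Fin m → Ω → ℝ) (hS : ∀ l, Measurable (S (Fin.last n) l))
    (j : Fin m) (lam : Fin m → ℝ) (x : ℝ) :
    gStar μ S V j (Function.update lam j x)
      = tailIntegral μ {ω | ∀ l < j, S (Fin.last n) l ω ≤ lam l} (S (Fin.last n) j)
          (V (Fin.last n) j) x := by
  rw [tailIntegral, ← integral_indicator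
    ((measurableSet_forall_lt_le hS j lam).inter (measurableSet_lt measurable_const (hS j)))]
  refine integral_congr_ae (Filter.Eventually.of_forall fun ω => ?_)
  have hupd : ∀ l < j, Function.update lam j x l = lam l := fun l hl =>
    Function.update_of_ne hl.ne _ _
  simp +contextual only [lossFn, indicator_apply, mem_inter_iff, mem_ofPred_eq, hupd,
    Function.update_self, mul_ite, mul_one, mul_zero]

theorem population_inverse_value_general
    {Ω : Type*} [MeasurableSpace Ω] (μ : Measure Ω) [IsProbabilityMeasure μ]
    (m n : ℕ)
    (S V : Fin (n + 1) → Fin m → Ω → ℝ)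
    (hSmeas : ∀ i j, Measurable (S i j)) (hVmeas : ∀ i j, Measurable (V i j))
    (lamMin lamMax : Fin m → ℝ) (hΛ : ∀ j, lamMin j ≤ lamMax j)
    (Vmin Vmax : Fin m → ℝ) (hVmin0 : ∀ j, 0 ≤ Vmin j) (hVle : ∀ j, Vmin j ≤ Vmax j)
    (hVbd : ∀ i j, ∀ᵐ ω ∂μ, V i j ω ∈ Icc (Vmin j) (Vmax j))
    (j : Fin m) (K : ℝ)
    (hK : ∀ s t : ℝ,
      |(μ {ω | S (Fin.last n) j ω ≤ s}).toReal - (μ {ω | S (Fin.last n) j ω ≤ t}).toReal|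
        ≤ K * |s - t|) :
    ∀ (lam : Fin m → ℝ),
      (∀ b : ℝ,
        gStar μ S V j (Function.update lam j (UStar μ S V lamMin lamMax j lam b))
          = max (gStar μ S V j (Function.update lam j (lamMax j)))
              (min (gStar μ S V j (Function.update lam j (lamMin j))) b)) ∧
      (∀ b b' : ℝ,
        |gStar μ S V j (Function.update lam j (UStar μ S V lamMin lamMax j lam b))
            - gStar μ S V j (Function.update lam j (UStar μ S V lamMin lamMax j lam b'))|
          ≤ |b - b'|) := by
  intro lam
  have hVbd' : ∀ᵐ ω ∂μ, V (Fin.last n) j ω ∈ Icc 0 (Vmax j) :=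
    (hVbd _ j).mono fun _ hω => ⟨(hVmin0 j).trans hω.1, hω.2⟩
  have hVint : Integrable (V (Fin.last n) j) μ :=
    .of_bound (hVmeas _ j).aestronglyMeasurable (Vmax j) <|
      hVbd'.mono fun _ hω => (Real.norm_of_nonneg hω.1).trans_le hω.2
  have hg : (fun x => gStar μ S V j (Function.update lam j x)) = tailIntegral μ
      {ω | ∀ l < j, S (Fin.last n) l ω ≤ lam l} (S (Fin.last n) j) (V (Fin.last n) j) :=
    funext (gStar_update_eq_tailIntegral μ S V (hSmeas _) j lam)
  have hcont : Continuous fun x => gStar μ S V j (Function.update lam j x) := by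
    rw [hg]
    exact (lipschitzWith_tailIntegral (measurableSet_forall_lt_le (hSmeas _) j lam) (hSmeas _ j)
      hVint ((hVmin0 j).trans (hVle j)) hVbd' hK).continuous
  have hanti : Antitone fun x => gStar μ S V j (Function.update lam j x) := by
    rw [hg]
    exact antitone_tailIntegral hVint (hVbd'.mono fun _ hω => hω.1)
  have hvalue : ∀ b, gStar μ S V j (Function.update lam j (UStar μ S V lamMin lamMax j lam b))
      = max (gStar μ S V j (Function.update lam j (lamMax j)))
          (min (gStar μ S V j (Function.update lam j (lamMin j))) b) :=
    apply_sSup_insert_superlevel_eq hcont hanti (hΛ j)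
  refine ⟨hvalue, fun b b' => ?_⟩
  rw [hvalue, hvalue]
  calc _ ≤ max |_ - _| |_ - _| := abs_max_sub_max_le_max _ _ _ _
    _ ≤ max |_ - _| (max |_ - _| |b - b'|) := by gcongr; exact abs_min_sub_min_le_max _ _ _ _
    _ = |b - b'| := by simp

/-- Lemma: value of the population risk at its generalized inverse, and
1-Lipschitz dependence on the level.  If the cdf of `S_j^{(n+1)}` is `K_j`-Lipschitz, then for
every `λ_{1:(j−1)}` and every `β`:
`g_j^*(U_j^*(λ_{1:(j−1)}; β); λ_{1:(j−1)})
  = max{g_j^*(λ_j^max; ·), min{g_j^*(λ_j^min; ·), β}}`,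
and consequently `β ↦ g_j^*(U_j^*(λ_{1:(j−1)}; β); λ_{1:(j−1)})` is 1-Lipschitz. -/
theorem population_inverse_value
    {Ω : Type*} [MeasurableSpace Ω] (μ : Measure Ω) [IsProbabilityMeasure μ]
    (m n : ℕ) (hm : 1 ≤ m) (hn : 1 ≤ n)
    (S V : Fin (n + 1) → Fin m → Ω → ℝ)
    (hSmeas : ∀ i j, Measurable (S i j)) (hVmeas : ∀ i j, Measurable (V i j))
    (lamMin lamMax : Fin m → ℝ) (hΛ : ∀ j, lamMin j ≤ lamMax j)
    (Vmin Vmax : Fin m → ℝ) (hVmin0 : ∀ j, 0 ≤ Vmin j) (hVle : ∀ j, Vmin j ≤ Vmax j)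
    (hVbd : ∀ i j, ∀ᵐ ω ∂μ, V i j ω ∈ Icc (Vmin j) (Vmax j))
    (j : Fin m) (K : ℝ) (hKpos : 0 < K)
    (hK : ∀ s t : ℝ,
      |(μ {ω | S (Fin.last n) j ω ≤ s}).toReal - (μ {ω | S (Fin.last n) j ω ≤ t}).toReal|
        ≤ K * |s - t|) :
    ∀ (lam : Fin m → ℝ),
      (∀ b : ℝ,
        gStar μ S V j (Function.update lam j (UStar μ S V lamMin lamMax j lam b))
          = max (gStar μ S V j (Function.update lam j (lamMax j)))
              (min (gStar μ S V j (Function.update lam j (lamMin j))) b)) ∧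
      (∀ b b' : ℝ,
        |gStar μ S V j (Function.update lam j (UStar μ S V lamMin lamMax j lam b))
            - gStar μ S V j (Function.update lam j (UStar μ S V lamMin lamMax j lam b'))|
          ≤ |b - b'|) :=
  population_inverse_value_general μ m n S V hSmeas hVmeas lamMin lamMax hΛ Vmin Vmax hVmin0 hVle
    hVbd j K hK

end
end
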